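/- Let V be a commutative unital quantale, F̂ a lax extension of F : Set → Set, and μ a κ-ary predicate lifting induced by F̂. Let h : V^κ ⇸ V^κ be the V-relation h(φ,ψ) = ⨅_{i ∈ κ} hom(ψ(i), φ(i)) (the structure of the dual V-category (V^κ)^op), and let 1_κ^♯ : κ → V^κ be the exponential transpose of the identity V-relation 1_κ : κ ⇸ κ. Then μ(ev_κ) = μ(1_κ) · ((F(1_κ^♯))_∘)° · F̂h. -/
import Mathlib


/-!
Common framework: commutative unital quantales, `V`-relations, lax extensions,
predicate liftings, Moss liftings and the Kantorovich extension.
-/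

universe u

namespace Paper

variable {V : Type u} [CommMonoid V] [CompleteLattice V]

/-- A `V`-relation `X ⇸ Y` is a map `X → Y → V`. -/
abbrev VRel (V : Type u) (X Y : Type u) : Type u := X → Y → V

/-- Composition of `V`-relations: `(s · r)(x,z) = ⨆ y, r x y ⊗ s y z`. -/
def vcomp {X Y Z : Type u} (s : VRel V Y Z) (r : VRel V X Y) : VRel V X Z :=
  fun x z => ⨆ y, r x y * s y z

/-- The internal hom of the quantale: `hom u w = ⨆ {v | u ⊗ v ≤ w}`. -/
def qhom (u w : V) : V := sSup {v | u * v ≤ w}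

/-- The lift `s ⊸ r` of `r : X ⇸ Z` along `s : Y ⇸ Z`. -/
def vlift {X Y Z : Type u} (s : VRel V Y Z) (r : VRel V X Z) : VRel V X Y :=
  fun x y => ⨅ z, qhom (s y z) (r x z)

/-- The extension `r ⟜ s` of `r : Y ⇸ Z` along `s : Y ⇸ X`. -/
def vext {X Y Z : Type u} (r : VRel V Y Z) (s : VRel V Y X) : VRel V X Z :=
  fun x z => ⨅ y, qhom (s y x) (r y z)

/-- Converse of a `V`-relation. -/
def vconv {X Y : Type u} (r : VRel V X Y) : VRel V Y X := fun y x => r x y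

/-- A function `f : X → Y` viewed as a `V`-relation `f_∘ : X ⇸ Y`. -/
def graph {X Y : Type u} (f : X → Y) : VRel V X Y :=
  fun x y => ⨆ _ : f x = y, (1 : V)

/-- The identity `V`-relation `1_X : X ⇸ X`. -/
def idRel (V : Type u) [CommMonoid V] [CompleteLattice V] (X : Type u) : VRel V X X :=
  fun x y => ⨆ _ : x = y, (1 : V)

/-- The `V`-category structure `[r,s]` on `V`-relations `X ⇸ Y`. -/
def brkt {X Y : Type u} (r s : VRel V X Y) : V :=
  ⨅ (x : X), ⨅ (y : Y), qhom (r x y) (s x y)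

/-- A lax extension of a `Set`-functor `F` to `V`-relations. -/
structure LaxExt (V : Type u) [CommMonoid V] [CompleteLattice V]
    (F : Type u → Type u) [Functor F] where
  ext : ∀ {X Y : Type u}, VRel V X Y → VRel V (F X) (F Y)
  mono : ∀ {X Y : Type u} {r r' : VRel V X Y}, r ≤ r' → ext r ≤ ext r'
  lax_comp : ∀ {X Y Z : Type u} (r : VRel V X Y) (s : VRel V Y Z),
    vcomp (ext s) (ext r) ≤ ext (vcomp s r)
  map_le : ∀ {X Y : Type u} (f : X → Y),
    graph (Functor.map f : F X → F Y) ≤ ext (graph f)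
  map_conv_le : ∀ {X Y : Type u} (f : X → Y),
    vconv (graph (Functor.map f : F X → F Y)) ≤ ext (vconv (graph f))

/-- A `V`-enriched lax extension. -/
def LaxExt.Enriched {F : Type u → Type u} [Functor F] (E : LaxExt V F) : Prop :=
  ∀ (X Y : Type u) (r r' : VRel V X Y), brkt r r' ≤ brkt (E.ext r) (E.ext r')

/-- A `κ`-ary predicate lifting of `F`, viewed relationally: it sends a
`V`-relation `f : X ⇸ κ` naturally to a `V`-relation `μ f : F X ⇸ 1`. -/
structure PredLift (V : Type u) [CommMonoid V] [CompleteLattice V]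
    (F : Type u → Type u) [Functor F] (κ : Type u) where
  app : ∀ {X : Type u}, VRel V X κ → VRel V (F X) PUnit
  natural : ∀ {X Y : Type u} (h : X → Y) (g : VRel V Y κ),
    app (vcomp g (graph h)) = vcomp (app g) (graph (Functor.map h : F X → F Y))

/-- Monotonicity of a predicate lifting. -/
def PredLift.Monotone {F : Type u → Type u} [Functor F] {κ : Type u}
    (μ : PredLift V F κ) : Prop :=
  ∀ {X : Type u} {f f' : VRel V X κ}, f ≤ f' → μ.app f ≤ μ.app f'

/-- `V`-enrichment of a predicate lifting. -/
def PredLift.Enriched {F : Type u → Type u} [Functor F] {κ : Type u}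
    (μ : PredLift V F κ) : Prop :=
  ∀ (X : Type u) (f f' : VRel V X κ), brkt f f' ≤ brkt (μ.app f) (μ.app f')

/-- A predicate lifting is induced by a lax extension `E` if `μ f = 𝔯 · E f`
for some `𝔯 : F κ ⇸ 1`. -/
def PredLift.InducedBy {F : Type u → Type u} [Functor F] {κ : Type u}
    (μ : PredLift V F κ) (E : LaxExt V F) : Prop :=
  ∃ rr : VRel V (F κ) PUnit, ∀ (X : Type u) (f : VRel V X κ),
    μ.app f = vcomp rr (E.ext f)

/-- The (underlying assignment of the) Moss lifting `μ^𝔨` of a lax extension,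
determined by an element `𝔨 ∈ F κ`: `μ^𝔨 f = (𝔨_∘)° · E f`. -/
def mossApp {F : Type u → Type u} [Functor F] (E : LaxExt V F) {κ : Type u}
    (k : F κ) (X : Type u) (f : VRel V X κ) : VRel V (F X) PUnit :=
  vcomp (vconv (graph (fun _ : PUnit => k))) (E.ext f)

/-- The Kantorovich extension of a `κ`-ary predicate-lifting assignment. -/
def kant {F : Type u → Type u} [Functor F] {κ : Type u}
    (μ : ∀ (X : Type u), VRel V X κ → VRel V (F X) PUnit)
    {X Y : Type u} (r : VRel V X Y) : VRel V (F X) (F Y) :=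
  ⨅ g : VRel V Y κ, vlift (μ Y g) (μ X (vcomp g r))

/-- The Kantorovich extension of a predicate lifting. -/
def PredLift.kant {F : Type u → Type u} [Functor F] {κ : Type u}
    (μ : PredLift V F κ) {X Y : Type u} (r : VRel V X Y) : VRel V (F X) (F Y) :=
  Paper.kant (fun _ g => μ.app g) r

/-- The evaluation `V`-relation `ev_κ : V^κ ⇸ κ`. -/
def evRel (V : Type u) [CommMonoid V] [CompleteLattice V] (κ : Type u) :
    VRel V (κ → V) κ :=
  fun φ i => φ i

end Paper

section Helpers
open Paper
variable {V : Type u} [CommMonoid V] [CompleteLattice V] [IsQuantale V]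

lemma mul_iSup' {ι : Sort*} (x : V) (f : ι → V) : x * ⨆ i, f i = ⨆ i, x * f i := by
  rw [iSup, IsQuantale.mul_sSup_distrib, iSup_range]

lemma iSup_mul' {ι : Sort*} (x : V) (f : ι → V) : (⨆ i, f i) * x = ⨆ i, f i * x := by
  rw [iSup, IsQuantale.sSup_mul_distrib, iSup_range]

lemma mul_ind (P : Prop) (x : V) : x * (⨆ _ : P, (1:V)) = ⨆ _ : P, x := by
  rw [mul_iSup']; simp

lemma ind_mul (P : Prop) (x : V) : (⨆ _ : P, (1:V)) * x = ⨆ _ : P, x := by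
  rw [iSup_mul']; simp

omit [IsQuantale V] in
lemma qhom_one (w : V) : qhom (1:V) w = w := by
  apply le_antisymm
  · exact sSup_le fun v hv => by simpa using hv
  · exact le_sSup (by simp [Set.mem_setOf_eq])

lemma bot_mul' (x : V) : (⊥:V) * x = ⊥ := by
  rw [← sSup_empty, IsQuantale.sSup_mul_distrib]; simp

lemma qhom_bot (w : V) : qhom (⊥:V) w = ⊤ := by
  apply le_antisymm le_top
  exact le_sSup (by simp [Set.mem_setOf_eq, bot_mul'])

lemma vcomp_assoc {X Y Z W : Type u} (u : VRel V Z W) (s : VRel V Y Z) (r : VRel V X Y) :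
    vcomp u (vcomp s r) = vcomp (vcomp u s) r := by
  funext x w
  show ⨆ z, (⨆ y, r x y * s y z) * u z w = ⨆ y, r x y * ⨆ z, s y z * u z w
  simp_rw [iSup_mul', mul_iSup', mul_assoc]
  rw [iSup_comm]

lemma vcomp_id_left {X Y : Type u} (r : VRel V X Y) : vcomp (idRel V Y) r = r := by
  funext x y
  show ⨆ y', r x y' * idRel V Y y' y = r x y
  simp_rw [Paper.idRel, mul_ind]
  exact iSup_iSup_eq_left

lemma vcomp_id_right {X Y : Type u} (s : VRel V X Y) : vcomp s (idRel V X) = s := by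
  funext x y
  show ⨆ x', idRel V X x x' * s x' y = s x y
  simp_rw [Paper.idRel, ind_mul]
  exact iSup_iSup_eq_right

lemma vcomp_mono {X Y Z : Type u} {s s' : VRel V Y Z} {r r' : VRel V X Y}
    (hs : s ≤ s') (hr : r ≤ r') : vcomp s r ≤ vcomp s' r' := by
  intro x z
  exact iSup_mono fun y => mul_le_mul' (hr x y) (hs y z)

lemma vcomp_conv_graph {X Y Z : Type u} (f : X → Y) (s : VRel V Z Y) :
    vcomp (vconv (graph f)) s = fun z x => s z (f x) := by
  funext z x
  show ⨆ y, s z y * graph (V := V) f x y = s z (f x)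
  simp_rw [Paper.graph, mul_ind]
  exact iSup_iSup_eq_right

lemma h_transpose {κ : Type u} (φ : κ → V) (z : κ) :
    (⨅ i, qhom (idRel V κ z i) (φ i)) = φ z := by
  apply le_antisymm
  · refine le_trans (iInf_le _ z) ?_
    have hz : idRel V κ z z = (1:V) := by simp [Paper.idRel]
    rw [hz, qhom_one]
  · refine le_iInf fun i => ?_
    by_cases hzi : z = i
    · subst hzi
      have hz : idRel V κ z z = (1:V) := by simp [Paper.idRel]
      rw [hz, qhom_one]
    · have hz : idRel V κ z i = (⊥:V) := by simp [Paper.idRel, hzi]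
      rw [hz, qhom_bot]; exact le_top

lemma ev_eq {κ : Type u} :
    vcomp (vconv (graph (fun i : κ => idRel V κ i)))
      (fun φ ψ : κ → V => ⨅ i, qhom (ψ i) (φ i)) = evRel V κ := by
  rw [vcomp_conv_graph]
  funext φ z
  exact h_transpose φ z

lemma graph_ev_le_h {κ : Type u} :
    vcomp (graph (fun i : κ => idRel V κ i)) (evRel V κ) ≤
      (fun φ ψ : κ → V => ⨅ i, qhom (ψ i) (φ i)) := by
  intro φ ψ
  show ⨆ i, evRel V κ φ i * graph (V := V) (fun i : κ => idRel V κ i) i ψ ≤ _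
  refine iSup_le fun i => ?_
  simp_rw [Paper.graph, mul_ind]
  refine iSup_le fun hti => ?_
  subst hti
  exact le_of_eq (h_transpose φ i).symm

omit [IsQuantale V] in
lemma id_le_conv_comp {X Y : Type u} (f : X → Y) :
    idRel V X ≤ vcomp (vconv (graph f)) (graph f) := by
  intro x z
  show (⨆ _ : x = z, (1:V)) ≤ ⨆ y, graph (V := V) f x y * graph (V := V) f z y
  refine iSup_le fun hxz => ?_
  subst hxz
  refine le_trans ?_ (le_iSup _ (f x))
  simp [Paper.graph]

end Helpers


open Paper in
/-- A predicate lifting induced by a lax extension is expressed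
via the structure `h` of the dual `V`-category `(V^κ)^op`:
`μ(ev_κ) = μ(1_κ) · ((F 1_κ^♯)_∘)° · F̂ h`. -/
theorem induced_via_dual_structure {V : Type u} [CommMonoid V] [CompleteLattice V] [IsQuantale V]
    {F : Type u → Type u} [Functor F] [LawfulFunctor F]
    (E : LaxExt V F) {κ : Type u} (μ : PredLift V F κ) (hμ : μ.InducedBy E) :
    μ.app (evRel V κ) =
      vcomp (μ.app (idRel V κ))
        (vcomp (vconv (graph (Functor.map (fun i : κ => idRel V κ i) : F κ → F (κ → V))))
          (E.ext (fun φ ψ : κ → V => ⨅ i, qhom (ψ i) (φ i)))) := by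
  obtain ⟨rr, hrr⟩ := hμ
  have hid : idRel V (F κ) ≤ E.ext (idRel V κ) := by
    have h1 := E.map_le (id : κ → κ)
    rw [show (Functor.map (id : κ → κ) : F κ → F κ) = id from funext fun x => id_map x] at h1
    exact h1
  rw [hrr, hrr]
  set t : κ → (κ → V) := fun i : κ => idRel V κ i with ht
  set h : VRel V (κ → V) (κ → V) := fun φ ψ : κ → V => ⨅ i, qhom (ψ i) (φ i) with hh
  set g : VRel V (F κ) (F (κ → V)) := graph (Functor.map t) with hg
  apply le_antisymm
  · have chain : E.ext (evRel V κ) ≤ vcomp (vconv g) (E.ext h) := by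
      calc E.ext (evRel V κ)
          = vcomp (idRel V (F κ)) (E.ext (evRel V κ)) := (vcomp_id_left _).symm
        _ ≤ vcomp (vcomp (vconv g) g) (E.ext (evRel V κ)) :=
            vcomp_mono (id_le_conv_comp _) le_rfl
        _ = vcomp (vconv g) (vcomp g (E.ext (evRel V κ))) := (vcomp_assoc _ _ _).symm
        _ ≤ vcomp (vconv g) (vcomp (E.ext (graph t)) (E.ext (evRel V κ))) :=
            vcomp_mono le_rfl (vcomp_mono (E.map_le t) le_rfl)
        _ ≤ vcomp (vconv g) (E.ext (vcomp (graph t) (evRel V κ))) :=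
            vcomp_mono le_rfl (E.lax_comp _ _)
        _ ≤ vcomp (vconv g) (E.ext h) :=
            vcomp_mono le_rfl (E.mono graph_ev_le_h)
    calc vcomp rr (E.ext (evRel V κ))
        ≤ vcomp rr (vcomp (vconv g) (E.ext h)) := vcomp_mono le_rfl chain
      _ = vcomp (vcomp rr (idRel V (F κ))) (vcomp (vconv g) (E.ext h)) := by
            rw [vcomp_id_right]
      _ ≤ vcomp (vcomp rr (E.ext (idRel V κ))) (vcomp (vconv g) (E.ext h)) :=
            vcomp_mono (vcomp_mono le_rfl hid) le_rfl
  · calc vcomp (vcomp rr (E.ext (idRel V κ))) (vcomp (vconv g) (E.ext h))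
        ≤ vcomp (vcomp rr (E.ext (idRel V κ))) (vcomp (E.ext (vconv (graph t))) (E.ext h)) :=
          vcomp_mono le_rfl (vcomp_mono (E.map_conv_le t) le_rfl)
      _ ≤ vcomp (vcomp rr (E.ext (idRel V κ))) (E.ext (vcomp (vconv (graph t)) h)) :=
          vcomp_mono le_rfl (E.lax_comp _ _)
      _ = vcomp (vcomp rr (E.ext (idRel V κ))) (E.ext (evRel V κ)) := by
          rw [ht, hh, ev_eq]
      _ = vcomp rr (vcomp (E.ext (idRel V κ)) (E.ext (evRel V κ))) := (vcomp_assoc _ _ _).symm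
      _ ≤ vcomp rr (E.ext (vcomp (idRel V κ) (evRel V κ))) :=
          vcomp_mono le_rfl (E.lax_comp _ _)
      _ = vcomp rr (E.ext (evRel V κ)) := by rw [vcomp_id_left]
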